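/- arXiv:1207.1305 — 5 statements merged into one kernel-verified Lean document; each statement's English description precedes it below -/
import Mathlib

section
/- For all x ∈ (0, 2π), f'(x) ≥ f'(π) = -7/8, where f(x) = sin(x)·(1 - 1/(8·sin³(x/2))). -/
open Real Set

noncomputable def f (x : ℝ) : ℝ := Real.sin x * (1 - 1 / (8 * Real.sin (x/2)^3))

/-
With s = sin (x/2) ∈ (0, 1] and cos x = 1 - 2 s², the derivative
f' x = cos x + (3 + cos x) / (16 s³) satisfies
f' x + 7/8 = (1 - s) (16 s⁴ + 16 s³ + s² + 2 s + 2) / (8 s³) ≥ 0,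
with equality exactly at s = 1, i.e. x = π.
-/

theorem cos_eq_one_sub_two_mul_sin_half_sq (x : ℝ) : cos x = 1 - 2 * sin (x / 2) ^ 2 := by
  rw [← cos_two_mul_eq_one_sub, mul_div_cancel₀ x two_ne_zero]

theorem hasDerivAt_f {x : ℝ} (hx : sin (x / 2) ≠ 0) :
    HasDerivAt f (cos x + (3 + cos x) / (16 * sin (x / 2) ^ 3)) x := by
  have hhalf : HasDerivAt (fun y : ℝ => sin (y / 2)) (cos (x / 2) / 2) x := by
    simpa [div_eq_mul_inv] using ((hasDerivAt_id x).div_const 2).sin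
  have hf : HasDerivAt f _ x := (hasDerivAt_sin x).fun_mul <| HasDerivAt.const_sub 1 <|
    (hasDerivAt_const x 1).fun_div ((hhalf.fun_pow 3).const_mul 8)
      (mul_ne_zero (by norm_num) (pow_ne_zero 3 hx))
  refine hf.congr_deriv ?_
  have hsin : sin x = 2 * sin (x / 2) * cos (x / 2) := by
    rw [← sin_two_mul]; ring_nf
  rw [hsin, cos_eq_one_sub_two_mul_sin_half_sq x]
  field_simp
  linear_combination 48 * sin (x / 2) ^ 2 * sin_sq_add_cos_sq (x / 2)

theorem neg_seven_div_eight_le_of_pos_of_le_one {s : ℝ} (hs₀ : 0 < s) (hs₁ : s ≤ 1) :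
    -7 / 8 ≤ 1 - 2 * s ^ 2 + (3 + (1 - 2 * s ^ 2)) / (16 * s ^ 3) := by
  have hfactor : 1 - 2 * s ^ 2 + (3 + (1 - 2 * s ^ 2)) / (16 * s ^ 3) + 7 / 8
      = (1 - s) * (16 * s ^ 4 + 16 * s ^ 3 + s ^ 2 + 2 * s + 2) / (8 * s ^ 3) := by
    field_simp; ring
  have hnonneg : 0 ≤ (1 - s) * (16 * s ^ 4 + 16 * s ^ 3 + s ^ 2 + 2 * s + 2) / (8 * s ^ 3) := by
    have hs : 0 ≤ 1 - s := by linarith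
    positivity
  linarith

theorem stmt3 : deriv f π = -7/8 ∧ ∀ x ∈ Ioo (0:ℝ) (2*π), deriv f x ≥ -7/8 := by
  refine ⟨?_, fun x ⟨hx₀, hx₁⟩ => ?_⟩
  · rw [(hasDerivAt_f (by simp)).deriv]
    norm_num
  · have hs₀ : 0 < sin (x / 2) := sin_pos_of_pos_of_lt_pi (by linarith) (by linarith)
    rw [(hasDerivAt_f hs₀.ne').deriv, cos_eq_one_sub_two_mul_sin_half_sq x]
    exact neg_seven_div_eight_le_of_pos_of_le_one hs₀ (sin_le_one _)
end

section
/- There is no solution (θ₁, θ₂, θ₃, θ₄) with all θᵢ > 0, θ₁ + θ₂ + θ₃ = π, θ₄ = π, of the system: μ₂f(θ₁) = μ₃f(π+θ₃); μ₃f(θ₂) = μ₄f(π+θ₁) + μ₁f(θ₁); μ₄f(θ₃) + μ₁f(θ₃+θ₄) = μ₂f(θ₂); μ₃f(θ₃) = μ₂f(π+θ₁), for any positive parameters μ₁, μ₂, μ₃, μ₄. Equivalently, in a central configuration of the planar 1+4 body problem no two consecutive satellites can be diametrically opposite. -/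
open Real Set

lemma fneg {x : ℝ} (h0 : 0 < x) (h1 : x < π/3) : f x < 0 := by
  have hπ := Real.pi_pos
  have hs : 0 < Real.sin x := Real.sin_pos_of_pos_of_lt_pi h0 (by linarith)
  have hs2 : Real.sin (x/2) < 1/2 := by
    have := Real.sin_lt_sin_of_lt_of_le_pi_div_two (x := x/2) (y := π/6)
      (by linarith) (by linarith) (by linarith)
    rwa [Real.sin_pi_div_six] at this
  have hs2p : 0 < Real.sin (x/2) := Real.sin_pos_of_pos_of_lt_pi (by linarith) (by linarith)
  have hpos : 0 < 8 * Real.sin (x/2)^3 := by positivity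
  have hcube : Real.sin (x/2)^3 < (1/2:ℝ)^3 := pow_lt_pow_left₀ hs2 hs2p.le (by norm_num)
  have hfrac : 1 < 1 / (8 * Real.sin (x/2)^3) := by
    rw [lt_div_iff₀ hpos]; nlinarith
  exact mul_neg_of_pos_of_neg hs (by linarith)

lemma fpos {x : ℝ} (h0 : π/3 < x) (h1 : x < π) : 0 < f x := by
  have hπ := Real.pi_pos
  have hs : 0 < Real.sin x := Real.sin_pos_of_pos_of_lt_pi (by linarith) h1
  have hs2 : 1/2 < Real.sin (x/2) := by
    have := Real.sin_lt_sin_of_lt_of_le_pi_div_two (x := π/6) (y := x/2)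
      (by linarith) (by linarith) (by linarith)
    rwa [Real.sin_pi_div_six] at this
  have hpos : 0 < 8 * Real.sin (x/2)^3 := by positivity
  have hcube : (1/2:ℝ)^3 < Real.sin (x/2)^3 := pow_lt_pow_left₀ hs2 (by norm_num) (by norm_num)
  have hfrac : 1 / (8 * Real.sin (x/2)^3) < 1 := by
    rw [div_lt_one hpos]; nlinarith
  exact mul_pos hs (by linarith)

lemma fzero : f (π/3) = 0 := by
  unfold f
  rw [show (π/3)/2 = π/6 by ring, Real.sin_pi_div_six]
  norm_num

lemma gneg {θ : ℝ} (h0 : 0 < θ) (h1 : θ < 2*π/3) : f (π + θ) < 0 := by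
  have hπ := Real.pi_pos
  have hsin : Real.sin (π + θ) = -Real.sin θ := by rw [Real.sin_add]; simp
  have hhalf : Real.sin ((π + θ)/2) = Real.cos (θ/2) := by
    rw [show (π + θ)/2 = π/2 + θ/2 by ring, Real.sin_add]; simp
  have hst : 0 < Real.sin θ := Real.sin_pos_of_pos_of_lt_pi h0 (by linarith)
  have hc : 1/2 < Real.cos (θ/2) := by
    have := Real.cos_lt_cos_of_nonneg_of_le_pi (x := θ/2) (y := π/3)
      (by linarith) (by linarith) (by linarith)
    rwa [Real.cos_pi_div_three] at this
  have hpos : 0 < 8 * Real.cos (θ/2)^3 := by positivity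
  have hcube : (1/2:ℝ)^3 < Real.cos (θ/2)^3 := pow_lt_pow_left₀ hc (by norm_num) (by norm_num)
  have hfrac : 1 / (8 * Real.cos (θ/2)^3) < 1 := by
    rw [div_lt_one hpos]; nlinarith
  unfold f
  rw [hsin, hhalf]
  exact mul_neg_of_neg_of_pos (by linarith) (by linarith)

lemma gpos {θ : ℝ} (h0 : 2*π/3 < θ) (h1 : θ < π) : 0 < f (π + θ) := by
  have hπ := Real.pi_pos
  have hsin : Real.sin (π + θ) = -Real.sin θ := by rw [Real.sin_add]; simp
  have hhalf : Real.sin ((π + θ)/2) = Real.cos (θ/2) := by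
    rw [show (π + θ)/2 = π/2 + θ/2 by ring, Real.sin_add]; simp
  have hst : 0 < Real.sin θ := Real.sin_pos_of_pos_of_lt_pi (by linarith) h1
  have hc : Real.cos (θ/2) < 1/2 := by
    have := Real.cos_lt_cos_of_nonneg_of_le_pi (x := π/3) (y := θ/2)
      (by linarith) (by linarith) (by linarith)
    rwa [Real.cos_pi_div_three] at this
  have hcp : 0 < Real.cos (θ/2) := Real.cos_pos_of_mem_Ioo ⟨by linarith, by linarith⟩
  have hpos : 0 < 8 * Real.cos (θ/2)^3 := by positivity
  have hcube : Real.cos (θ/2)^3 < (1/2:ℝ)^3 := pow_lt_pow_left₀ hc hcp.le (by norm_num)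
  have hfrac : 1 < 1 / (8 * Real.cos (θ/2)^3) := by
    rw [lt_div_iff₀ hpos]; nlinarith
  unfold f
  rw [hsin, hhalf]
  exact mul_pos_of_neg_of_neg (by linarith) (by linarith)

lemma gzero : f (π + 2*π/3) = 0 := by
  unfold f
  rw [show (π + 2*π/3)/2 = π - π/6 by ring, Real.sin_pi_sub, Real.sin_pi_div_six]
  norm_num

lemma fneg' {x : ℝ} (h0 : 0 < x) (h1 : x < π) (h : f x < 0) : x < π/3 := by
  rcases lt_trichotomy x (π/3) with h' | h' | h'
  · exact h'
  · rw [h', fzero] at h; linarith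
  · exact absurd h (not_lt.2 (fpos h' h1).le)

lemma gpos' {θ : ℝ} (h0 : 0 < θ) (h1 : θ < π) (h : 0 < f (π + θ)) : 2*π/3 < θ := by
  rcases lt_trichotomy θ (2*π/3) with h' | h' | h'
  · exact absurd h (not_lt.2 (gneg h0 h').le)
  · rw [h', gzero] at h; linarith
  · exact h'

lemma gzero' {θ : ℝ} (h0 : 0 < θ) (h1 : θ < π) (h : f (π + θ) = 0) : θ = 2*π/3 := by
  rcases lt_trichotomy θ (2*π/3) with h' | h' | h'
  · exact absurd h (gneg h0 h').ne
  · exact h'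
  · exact absurd h.symm (gpos h' h1).ne

theorem stmt9 : ¬ ∃ (θ₁ θ₂ θ₃ θ₄ μ₁ μ₂ μ₃ μ₄ : ℝ),
    0 < θ₁ ∧ 0 < θ₂ ∧ 0 < θ₃ ∧ 0 < θ₄ ∧
    θ₁ + θ₂ + θ₃ = π ∧ θ₄ = π ∧
    0 < μ₁ ∧ 0 < μ₂ ∧ 0 < μ₃ ∧ 0 < μ₄ ∧
    μ₂ * f θ₁ = μ₃ * f (π + θ₃) ∧
    μ₃ * f θ₂ = μ₄ * f (π + θ₁) + μ₁ * f θ₁ ∧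
    μ₄ * f θ₃ + μ₁ * f (θ₃ + θ₄) = μ₂ * f θ₂ ∧
    μ₃ * f θ₃ = μ₂ * f (π + θ₁) := by
  rintro ⟨θ₁, θ₂, θ₃, θ₄, μ₁, μ₂, μ₃, μ₄, h1, h2, h3, h4, hsum, hθ4,
    hμ1, hμ2, hμ3, hμ4, e1, e2, e3, e4⟩
  have hπ := Real.pi_pos
  have hθ1π : θ₁ < π := by linarith
  have hθ2π : θ₂ < π := by linarith
  have hθ3π : θ₃ < π := by linarith
  rcases lt_trichotomy θ₁ (π/3) with hc | hc | hc
  · -- θ₁ < π/3 : show θ₂, θ₃ < π/3 too, contradicting the sum.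
    have hf1 : f θ₁ < 0 := fneg h1 hc
    have hg1 : f (π + θ₁) < 0 := gneg h1 (by linarith)
    have hf3 : f θ₃ < 0 := by nlinarith
    have hθ3 : θ₃ < π/3 := fneg' h3 hθ3π hf3
    have hf2 : f θ₂ < 0 := by nlinarith
    have hθ2 : θ₂ < π/3 := fneg' h2 hθ2π hf2
    linarith
  · -- θ₁ = π/3 : forces θ₃ = 2π/3, so θ₂ = 0.
    have hf1 : f θ₁ = 0 := by rw [hc, fzero]
    have hg3 : f (π + θ₃) = 0 := by
      have : μ₃ * f (π + θ₃) = 0 := by rw [← e1, hf1]; ring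
      exact (mul_eq_zero.1 this).resolve_left hμ3.ne'
    have hθ3 : θ₃ = 2*π/3 := gzero' h3 hθ3π hg3
    linarith
  · -- θ₁ > π/3 : forces θ₃ > 2π/3 and θ₁ > 2π/3, sum too big.
    have hf1 : 0 < f θ₁ := fpos hc hθ1π
    have hg3 : 0 < f (π + θ₃) := by nlinarith
    have hθ3 : 2*π/3 < θ₃ := gpos' h3 hθ3π hg3
    have hf3 : 0 < f θ₃ := fpos (by linarith) hθ3π
    have hg1 : 0 < f (π + θ₁) := by nlinarith
    have hθ1 : 2*π/3 < θ₁ := gpos' h1 hθ1π hg1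
    linarith
end

section
/- The function l(x) = f(x)/f(π - x) is injective on the interval (2π/3, π), where f(x) = sin(x)·(1 - 1/(8·sin³(x/2))). -/
/-!
Write s = sin (x/2) and c = cos (x/2). Since sin ((π - x)/2) = c, the common factor sin x cancels
and l(x) = g(s)/g(c) with g(u) = 1 - 1/(8u³). As a function of t = x/2 ∈ (π/3, π/2) this ratio
has derivative 3 (8 (s⁵ + c⁵) - 1) / (64 s⁴ c⁴ g(c)²) (using s² + c² = 1), which is positive because
s² > 3/4 there. So l is strictly increasing, hence injective.
-/

open Real Set

noncomputable def g (u : ℝ) : ℝ := 1 - 1 / (8 * u ^ 3)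

noncomputable def gRatio (t : ℝ) : ℝ := g (sin t) / g (cos t)

lemma f_pi_sub (x : ℝ) : f (π - x) = sin x * g (cos (x / 2)) := by
  rw [f, g, sin_pi_sub, show (π - x) / 2 = π / 2 - x / 2 by ring, sin_pi_div_two_sub]

lemma f_div_f_pi_sub {x : ℝ} (hx : sin x ≠ 0) :
    f x / f (π - x) = gRatio (x / 2) := by
  rw [f_pi_sub, gRatio, ← mul_div_mul_left (g (sin (x / 2))) _ hx]
  rfl

lemma g_neg {u : ℝ} (hu₀ : 0 < u) (hu : u < 1 / 2) : g u < 0 := by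
  have h8 : 8 * u ^ 3 < 1 := by nlinarith [pow_lt_pow_left₀ hu hu₀.le three_ne_zero]
  have : 1 < 1 / (8 * u ^ 3) := one_lt_one_div (by positivity) h8
  rw [g]
  linarith

lemma hasDerivAt_g {u : ℝ} (hu : u ≠ 0) : HasDerivAt g (3 / (8 * u ^ 4)) u := by
  have h := ((hasDerivAt_const u (1 : ℝ)).fun_div ((hasDerivAt_pow 3 u).const_mul 8)
    (by positivity)).const_sub 1
  refine h.congr_deriv ?_
  field_simp
  ring

lemma hasDerivAt_gRatio {t : ℝ} (hs : sin t ≠ 0) (hc : cos t ≠ 0) (hg : g (cos t) ≠ 0) :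
    HasDerivAt gRatio
      (3 * (8 * (sin t ^ 5 + cos t ^ 5) - 1) / (64 * sin t ^ 4 * cos t ^ 4 * g (cos t) ^ 2)) t := by
  have h := ((hasDerivAt_g hs).comp t (hasDerivAt_sin t)).fun_div
    ((hasDerivAt_g hc).comp t (hasDerivAt_cos t)) hg
  refine h.congr_deriv ?_
  have hpy := sin_sq_add_cos_sq t
  simp only [Function.comp_apply]
  field_simp
  simp only [g]
  field_simp
  linear_combination -64 * hpy

lemma strictMonoOn_gRatio : StrictMonoOn gRatio (Ioo (π / 3) (π / 2)) := by
  have hderiv : ∀ t ∈ Ioo (π / 3) (π / 2), ∃ d, HasDerivAt gRatio d t ∧ 0 < d := by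
    rintro t ⟨ht₁, ht₂⟩
    have hs : 0 < sin t := sin_pos_of_pos_of_lt_pi (by linarith [pi_pos]) (by linarith [pi_pos])
    have hc : 0 < cos t := cos_pos_of_mem_Ioo ⟨by linarith [pi_pos], ht₂⟩
    have hc₂ : cos t < 1 / 2 := cos_pi_div_three ▸
      cos_lt_cos_of_nonneg_of_le_pi (by linarith [pi_pos]) (by linarith [pi_pos]) ht₁
    have hg := g_neg hc hc₂
    have hs₂ : 3 / 4 < sin t ^ 2 := by nlinarith [sin_sq_add_cos_sq t]
    have hs₁ : 1 / 2 < sin t := by nlinarith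
    have hs₅ : 1 < 8 * sin t ^ 5 := by nlinarith [mul_lt_mul'' hs₂ hs₂ (by norm_num) (by norm_num)]
    refine ⟨_, hasDerivAt_gRatio hs.ne' hc.ne' hg.ne, div_pos ?_ ?_⟩
    · nlinarith [pow_pos hc 5]
    · exact mul_pos (by positivity) (sq_pos_of_neg hg)
  refine strictMonoOn_of_deriv_pos (convex_Ioo _ _) (fun t ht => ?_) (fun t ht => ?_)
  · obtain ⟨d, hd, -⟩ := hderiv t ht
    exact hd.continuousAt.continuousWithinAt
  · rw [interior_Ioo] at ht
    obtain ⟨d, hd, hd₀⟩ := hderiv t ht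
    rwa [hd.deriv]

lemma strictMonoOn_f_div_f_pi_sub : StrictMonoOn (fun x => f x / f (π - x)) (Ioo (2 * π / 3) π) := by
  intro a ha b hb hab
  have hsin : ∀ x ∈ Ioo (2 * π / 3) π, sin x ≠ 0 := fun x hx =>
    (sin_pos_of_pos_of_lt_pi (by linarith [hx.1, pi_pos]) hx.2).ne'
  have hhalf : ∀ x ∈ Ioo (2 * π / 3) π, x / 2 ∈ Ioo (π / 3) (π / 2) := fun x hx =>
    ⟨by linarith [hx.1], by linarith [hx.2]⟩
  simp only [f_div_f_pi_sub (hsin a ha), f_div_f_pi_sub (hsin b hb)]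
  exact strictMonoOn_gRatio (hhalf a ha) (hhalf b hb) (by linarith)

theorem stmt10 : InjOn (fun x => f x / f (π - x)) (Ioo (2*π/3) π) :=
  strictMonoOn_f_div_f_pi_sub.injOn
end

section
/- Let a > 0 and g(x) = f(x) + a·f(2x) + f(π + x) on (0, π). If a ≤ 3√2/7, then g has exactly one zero in (0, π), namely x = π/2; if a > 3√2/7, then g has exactly three zeros in (0, π), of the form θ*, π/2, π - θ* with θ* ∈ (π/6, π/2). -/
/-!
With `s = sin (x/2)` and `c = cos (x/2)`, the function `g x · sin² x` factors as
`(c - s) · F (sin x / 2)` with `F p = (a/4) √(1 + 2p) (64 p³ - 1) - (1 + p)` (`gCofactor a`).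
The first factor vanishes only at `π/2`. On `[0, 1/2]` the cofactor `F` is negative up to `1/4`,
and on `[1/4, 1/2]` it is nondecreasing in `a` and, once `a ≥ 1/3`, strictly increasing in `p`,
with `F (1/2) = 7√2 a/4 - 3/2`. So for `a ≤ 3√2/7` it has no zero in `[0, 1/2)`, and for
larger `a` exactly one, `q ∈ (1/4, 1/2)`, which gives the two further zeros `arcsin (2q)` and
`π - arcsin (2q)`.
-/

open Real Set

lemma half_angle_identity (a s c : ℝ) (hs : s ≠ 0) (hc : c ≠ 0) (hsc : s ^ 2 + c ^ 2 = 1) :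
    (2*s*c*(1 - 1/(8*s^3)) + a*(2*(2*s*c)*(c^2-s^2)*(1 - 1/(8*(2*s*c)^3)))
        + (-(2*s*c))*(1 - 1/(8*c^3))) * (2*s*c)^2
      = (c - s) * (a/4*(c+s)*(64*(s*c)^3-1) - (1+s*c)) := by
  field_simp
  linear_combination (32*(s-c)) * hsc

/-- Here `p` stands for `sin x / 2 = sin (x/2) cos (x/2)`,
so that `√(1 + 2p) = cos (x/2) + sin (x/2)`. -/
noncomputable def gCofactor (a p : ℝ) : ℝ := a/4 * √(1 + 2*p) * (64*p^3 - 1) - (1 + p)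

lemma g_mul_sin_sq (a : ℝ) {x : ℝ} (hx : x ∈ Ioo 0 π) :
    (f x + a * f (2*x) + f (π + x)) * sin x ^ 2
      = (cos (x/2) - sin (x/2)) * gCofactor a (sin x / 2) := by
  obtain ⟨hx0, hxπ⟩ := hx
  have hs : 0 < sin (x/2) := sin_pos_of_pos_of_lt_pi (by linarith) (by linarith)
  have hc : 0 < cos (x/2) := cos_pos_of_mem_Ioo ⟨by linarith, by linarith⟩
  have hsc := sin_sq_add_cos_sq (x/2)
  have hsin : sin x = 2 * sin (x/2) * cos (x/2) := by
    rw [← sin_two_mul, mul_div_cancel₀ x two_ne_zero]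
  have hcos : cos x = cos (x/2) ^ 2 - sin (x/2) ^ 2 := by
    rw [← cos_two_mul', mul_div_cancel₀ x two_ne_zero]
  have hf2 : f (2*x) = 2 * sin x * cos x * (1 - 1/(8 * sin x ^ 3)) := by
    rw [f, sin_two_mul, mul_div_cancel_left₀ x two_ne_zero]
  have hfπ : f (π + x) = -sin x * (1 - 1/(8 * cos (x/2) ^ 3)) := by
    rw [f, sin_add, add_div, sin_add]
    simp
  have hsqrt : √(1 + 2 * (sin x / 2)) = cos (x/2) + sin (x/2) := by
    rw [← sqrt_sq (by positivity : 0 ≤ cos (x/2) + sin (x/2))]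
    congr 1
    linear_combination hsin - hsc
  rw [hf2, hfπ, f, gCofactor, hsqrt, hcos, hsin]
  convert half_angle_identity a _ _ hs.ne' hc.ne' hsc using 3 <;> ring

lemma cos_half_sub_sin_half_eq_zero_iff {x : ℝ} (hx : x ∈ Ioo 0 π) :
    cos (x/2) - sin (x/2) = 0 ↔ x = π/2 := by
  obtain ⟨hx0, hxπ⟩ := hx
  constructor
  · intro h
    have : x/2 = π/2 - x/2 :=
      injOn_cos ⟨by linarith, by linarith⟩ ⟨by linarith, by linarith⟩
        (by rw [cos_pi_div_two_sub]; linarith)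
    linarith
  · rintro rfl
    rw [show π/2/2 = π/4 by ring, cos_pi_div_four, sin_pi_div_four, sub_self]

lemma g_eq_zero_iff (a : ℝ) {x : ℝ} (hx : x ∈ Ioo 0 π) :
    f x + a * f (2*x) + f (π + x) = 0 ↔ x = π/2 ∨ gCofactor a (sin x / 2) = 0 := by
  have hsin : sin x ^ 2 ≠ 0 := pow_ne_zero 2 (sin_pos_of_pos_of_lt_pi hx.1 hx.2).ne'
  rw [← cos_half_sub_sin_half_eq_zero_iff hx, ← mul_eq_zero, ← g_mul_sin_sq a hx,
    mul_eq_zero, or_iff_left hsin]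

lemma setOf_g_eq_zero (a : ℝ) :
    {x ∈ Ioo 0 π | f x + a * f (2*x) + f (π + x) = 0}
      = insert (π/2) {x ∈ Ioo 0 π | gCofactor a (sin x / 2) = 0} := by
  have hπ : π/2 ∈ Ioo 0 π := ⟨by linarith [pi_pos], by linarith [pi_pos]⟩
  ext x
  simp only [mem_ofPred_eq, mem_insert_iff]
  constructor
  · rintro ⟨hx, hgx⟩
    exact ((g_eq_zero_iff a hx).1 hgx).imp_right fun h => ⟨hx, h⟩
  · rintro (rfl | ⟨hx, h⟩)
    · exact ⟨hπ, (g_eq_zero_iff a hπ).2 (Or.inl rfl)⟩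
    · exact ⟨hx, (g_eq_zero_iff a hx).2 (Or.inr h)⟩

lemma setOf_sin_eq {y : ℝ} (hy0 : 0 < y) (hy1 : y ≤ 1) :
    {x ∈ Ioo 0 π | sin x = y} = {arcsin y, π - arcsin y} := by
  have hθ0 : 0 < arcsin y := arcsin_pos.2 hy0
  have hθ1 : arcsin y ≤ π/2 := arcsin_le_pi_div_two y
  have hsin : sin (arcsin y) = y := sin_arcsin (by linarith) hy1
  ext x
  simp only [mem_ofPred_eq, mem_insert_iff, mem_singleton_iff]
  constructor
  · rintro ⟨⟨hx0, hxπ⟩, hx⟩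
    rcases le_total x (π/2) with hle | hge
    · exact Or.inl <| injOn_sin ⟨by linarith, hle⟩ ⟨by linarith, hθ1⟩ (hx.trans hsin.symm)
    · have hsin' : sin (π - x) = sin (arcsin y) := by rw [sin_pi_sub, hx, hsin]
      have : π - x = arcsin y :=
        injOn_sin ⟨by linarith, by linarith⟩ ⟨by linarith, hθ1⟩ hsin'
      exact Or.inr (by linarith)
  · rintro (rfl | rfl)
    · exact ⟨⟨hθ0, by linarith [pi_pos]⟩, hsin⟩
    · exact ⟨⟨by linarith, by linarith⟩, by rw [sin_pi_sub, hsin]⟩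

lemma eq_pi_div_two_of_sin_eq_one {x : ℝ} (hx : x ∈ Ioo 0 π) (h : sin x = 1) : x = π/2 := by
  have : x ∈ {x ∈ Ioo 0 π | sin x = 1} := ⟨hx, h⟩
  rw [setOf_sin_eq one_pos le_rfl, arcsin_one] at this
  rcases this with h | h <;> linarith [mem_singleton_iff.1 h]

lemma continuous_gCofactor (a : ℝ) : Continuous (gCofactor a) := by
  unfold gCofactor
  fun_prop

lemma gCofactor_quarter (a : ℝ) : gCofactor a (1/4) = -5/4 := by
  norm_num [gCofactor]

lemma gCofactor_half (a : ℝ) : gCofactor a (1/2) = 7 * √2 / 4 * (a - 3 * √2 / 7) := by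
  rw [gCofactor]
  norm_num
  linear_combination (3/4 : ℝ) * sq_sqrt (zero_le_two : (0 : ℝ) ≤ 2)

lemma gCofactor_neg_of_le_quarter {a p : ℝ} (ha : 0 ≤ a) (hp0 : 0 ≤ p) (hp : p ≤ 1/4) :
    gCofactor a p < 0 := by
  have hcube : 64 * p^3 - 1 ≤ 0 := by
    nlinarith [pow_le_pow_left₀ hp0 hp 3]
  have : a/4 * √(1 + 2*p) * (64*p^3 - 1) ≤ 0 :=
    mul_nonpos_of_nonneg_of_nonpos (by positivity) hcube
  rw [gCofactor]
  linarith

lemma gCofactor_mono_left {a b p : ℝ} (hab : a ≤ b) (hp : 1/4 ≤ p) :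
    gCofactor a p ≤ gCofactor b p := by
  have hcube : 0 ≤ 64 * p^3 - 1 := by
    nlinarith [pow_le_pow_left₀ (by norm_num) hp 3]
  have := mul_le_mul_of_nonneg_right hab (mul_nonneg (sqrt_nonneg (1 + 2*p)) hcube)
  rw [gCofactor, gCofactor]
  linarith

lemma hasDerivAt_gCofactor (a : ℝ) {p : ℝ} (hp : 0 < 1 + 2*p) :
    HasDerivAt (gCofactor a)
      (a/4 * ((64*p^3 - 1) / √(1 + 2*p) + √(1 + 2*p) * (192*p^2)) - 1) p := by
  have hsqrt : HasDerivAt (fun q : ℝ => √(1 + 2*q)) (2 / (2 * √(1 + 2*p))) p := by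
    simpa using (((hasDerivAt_id p).const_mul 2).const_add 1).sqrt hp.ne'
  have hcube : HasDerivAt (fun q : ℝ => 64*q^3 - 1) (192*p^2) p := by
    refine (((hasDerivAt_pow 3 p).const_mul (64:ℝ)).sub_const 1).congr_deriv ?_
    norm_num
    ring
  have hF : gCofactor a = fun q => a/4 * (√(1 + 2*q) * (64*q^3 - 1)) - (1 + q) := by
    funext q
    rw [gCofactor, mul_assoc]
  rw [hF]
  refine (((hsqrt.mul hcube).const_mul (a/4)).sub
    ((hasDerivAt_id p).const_add 1)).congr_deriv ?_
  have : √(1 + 2*p) ≠ 0 := (sqrt_pos.2 hp).ne'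
  field_simp

lemma gCofactor_strictMonoOn {a : ℝ} (ha : 1/3 ≤ a) :
    StrictMonoOn (gCofactor a) (Icc (1/4) (1/2)) := by
  apply strictMonoOn_of_deriv_pos (convex_Icc _ _) (continuous_gCofactor a).continuousOn
  intro p hp
  rw [interior_Icc] at hp
  obtain ⟨hp1, hp2⟩ := hp
  have hpos : 0 < 1 + 2*p := by linarith
  have hsqrt : 6/5 < √(1 + 2*p) := lt_sqrt (by norm_num) |>.2 (by linarith)
  have hcube : 0 ≤ (64*p^3 - 1) / √(1 + 2*p) :=
    div_nonneg (by nlinarith [pow_le_pow_left₀ (by norm_num) hp1.le 3]) (sqrt_nonneg _)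
  have hmain : 1 < a/4 * (√(1 + 2*p) * (192*p^2)) :=
    calc (1 : ℝ) < 1/3/4 * (6/5 * 12) := by norm_num
      _ ≤ a/4 * (√(1 + 2*p) * (192*p^2)) := by gcongr; nlinarith
  rw [(hasDerivAt_gCofactor a hpos).deriv]
  nlinarith [mul_nonneg (by linarith : 0 ≤ a/4) hcube]

lemma one_third_lt_three_sqrt_two_div_seven : 1/3 < 3 * √2 / 7 := by
  have : 7/9 < √2 := lt_sqrt (by norm_num) |>.2 (by norm_num)
  linarith

lemma gCofactor_neg_of_lt_half {a p : ℝ} (ha0 : 0 ≤ a) (ha : a ≤ 3 * √2 / 7) (hp0 : 0 ≤ p)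
    (hp : p < 1/2) : gCofactor a p < 0 := by
  rcases le_or_gt p (1/4) with hp1 | hp1
  · exact gCofactor_neg_of_le_quarter ha0 hp0 hp1
  · calc gCofactor a p ≤ gCofactor (3 * √2 / 7) p := gCofactor_mono_left ha hp1.le
      _ < gCofactor (3 * √2 / 7) (1/2) :=
        gCofactor_strictMonoOn one_third_lt_three_sqrt_two_div_seven.le
          ⟨hp1.le, hp.le⟩ ⟨by norm_num, le_rfl⟩ hp
      _ = 0 := by rw [gCofactor_half, sub_self, mul_zero]

lemma exists_gCofactor_eq_zero_iff {a : ℝ} (ha : 3 * √2 / 7 < a) :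
    ∃ q ∈ Ioo (1/4 : ℝ) (1/2), ∀ p ∈ Icc (0 : ℝ) (1/2),
      gCofactor a p = 0 ↔ p = q := by
  have hquarter : gCofactor a (1/4) < 0 := by rw [gCofactor_quarter]; norm_num
  have hhalf : 0 < gCofactor a (1/2) := by
    rw [gCofactor_half]
    exact mul_pos (by positivity) (by linarith)
  obtain ⟨q, hq, hq0⟩ := intermediate_value_Ioo (by norm_num : (1/4 : ℝ) ≤ 1/2)
    (continuous_gCofactor a).continuousOn ⟨hquarter, hhalf⟩
  have ha3 : 1/3 < a := one_third_lt_three_sqrt_two_div_seven.trans ha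
  refine ⟨q, hq, fun p ⟨hp0, hp1⟩ => ⟨fun hp => ?_, fun hpq => hpq ▸ hq0⟩⟩
  rcases le_or_gt p (1/4) with hp4 | hp4
  · exact absurd hp (gCofactor_neg_of_le_quarter (by linarith) hp0 hp4).ne
  · exact (gCofactor_strictMonoOn ha3.le).injOn ⟨hp4.le, hp1⟩ (Ioo_subset_Icc_self hq)
      (hp.trans hq0.symm)

lemma sin_div_two_mem_Ioc {x : ℝ} (hx : x ∈ Ioo 0 π) : sin x / 2 ∈ Ioc 0 (1/2) :=
  ⟨by linarith [sin_pos_of_pos_of_lt_pi hx.1 hx.2], by linarith [sin_le_one x]⟩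

theorem stmt16 (a : ℝ) (ha : 0 < a) :
    let g : ℝ → ℝ := fun x => f x + a * f (2*x) + f (π + x)
    (a ≤ 3 * Real.sqrt 2 / 7 → {x ∈ Ioo (0:ℝ) π | g x = 0} = {π/2}) ∧
    (a > 3 * Real.sqrt 2 / 7 → ∃ θ ∈ Ioo (π/6) (π/2),
      {x ∈ Ioo (0:ℝ) π | g x = 0} = {θ, π/2, π - θ}) := by
  intro g
  have hzeros : {x ∈ Ioo (0:ℝ) π | g x = 0}
      = insert (π/2) {x ∈ Ioo 0 π | gCofactor a (sin x / 2) = 0} := setOf_g_eq_zero a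
  refine ⟨fun hA => ?_, fun hA => ?_⟩
  · rw [hzeros, insert_eq, union_eq_left]
    rintro x ⟨hx, hF⟩
    obtain ⟨hp0, hp1⟩ := sin_div_two_mem_Ioc hx
    rcases hp1.lt_or_eq with hp1 | hp1
    · exact absurd hF (gCofactor_neg_of_lt_half ha.le hA hp0.le hp1).ne
    · exact eq_pi_div_two_of_sin_eq_one hx (by linarith)
  · obtain ⟨q, ⟨hq1, hq2⟩, hzero⟩ := exists_gCofactor_eq_zero_iff hA
    have hsin : {x ∈ Ioo 0 π | gCofactor a (sin x / 2) = 0} = {x ∈ Ioo 0 π | sin x = 2*q} :=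
      sep_ext_iff.2 fun x hx => by
        rw [hzero _ (Ioc_subset_Icc_self (sin_div_two_mem_Ioc hx))]
        constructor <;> intro <;> linarith
    have hsixth : arcsin (1/2) = π/6 :=
      arcsin_eq_of_sin_eq sin_pi_div_six ⟨by linarith [pi_pos], by linarith [pi_pos]⟩
    refine ⟨arcsin (2*q), ⟨?_, arcsin_lt_pi_div_two.2 (by linarith)⟩, ?_⟩
    · rw [← hsixth]
      exact arcsin_lt_arcsin (by norm_num) (by linarith) (by linarith)
    · rw [hzeros, hsin, setOf_sin_eq (by linarith) (by linarith), insert_comm]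
end

section
/- The function h(x) = (-f(π + x) - f(x))/f(2x) is strictly decreasing on (π/6, π/2) and maps (π/6, π/2) bijectively onto (3√2/7, +∞), with h(x) → +∞ as x → π/6⁺ and h(x) → 3√2/7 as x → π/2⁻. -/
open Real Set

noncomputable def h (x : ℝ) : ℝ := (- f (π + x) - f x) / f ( 2*x)

/-!
With `s = sin (x/2)`, `c = cos (x/2)` and `u = sin x = 2sc`, one has `f (π + x) = -u (1 - 1/(8c³))`
and `f (2x) = 2u cos x (1 - 1/(8u³))`, so for `0 < x < π/2` everything collapses to
`h x = 2(2 + u) / (√(1 + u) (8u³ - 1))`, using `c³ - s³ = (c - s)(1 + sc)`, `cos x = c² - s²`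
and `c + s = √(1 + u)`. On `u > 1/2` this is the product of the positive decreasing functions
`(2 + u)/(8u³ - 1)` and `1/√(1 + u)`; the denominator vanishes at `u = 1/2` and the value at
`u = 1` is `3√2/7`. Since `sin` increases from `1/2` to `1` on `(π/6, π/2)`, the intermediate value
theorem gives the image.
-/

open Filter Topology

theorem Ioi_subset_image_Ioo_of_tendsto {α δ : Type*} [ConditionallyCompleteLinearOrder α]
    [TopologicalSpace α] [OrderTopology α] [DenselyOrdered α] [LinearOrder δ]
    [TopologicalSpace δ] [OrderClosedTopology δ] {φ : α → δ} {a b : α} {c : δ} (hab : a < b)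
    (hφ : ContinuousOn φ (Ioo a b)) (ha : Tendsto φ (𝓝[>] a) atTop)
    (hb : Tendsto φ (𝓝[<] b) (𝓝 c)) : Ioi c ⊆ φ '' Ioo a b := by
  intro y hy
  have : (𝓝[>] a).NeBot := nhdsGT_neBot_of_exists_gt ⟨b, hab⟩
  have : (𝓝[<] b).NeBot := nhdsLT_neBot_of_exists_lt ⟨a, hab⟩
  obtain ⟨x₁, hx₁, hy₁⟩ :=
    (Eventually.and (Ioo_mem_nhdsGT hab) (ha.eventually_ge_atTop y)).exists
  obtain ⟨x₂, hx₂, hy₂⟩ := (Eventually.and (Ioo_mem_nhdsLT hab) (hb.eventually_lt_const hy)).exists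
  exact hφ.surjOn_uIcc hx₁ hx₂ (mem_uIcc.2 (Or.inr ⟨hy₂.le, hy₁⟩))

noncomputable def hOfSin (u : ℝ) : ℝ := 2 * (2 + u) / (√(1 + u) * (8 * u ^ 3 - 1))

lemma eight_mul_pow_three_sub_one_pos {u : ℝ} (hu : 1 / 2 < u) : 0 < 8 * u ^ 3 - 1 := by
  nlinarith [pow_lt_pow_left₀ hu (by norm_num) three_ne_zero]

lemma hOfSin_denom_pos {u : ℝ} (hu : 1 / 2 < u) : 0 < √(1 + u) * (8 * u ^ 3 - 1) :=
  mul_pos (sqrt_pos.2 (by linarith)) (eight_mul_pow_three_sub_one_pos hu)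

lemma hOfSin_one : hOfSin 1 = 3 * √2 / 7 := by
  rw [hOfSin, div_eq_div_iff (by norm_num) (by norm_num)]
  norm_num
  nlinarith [mul_self_sqrt (zero_le_two : (0 : ℝ) ≤ 2)]

lemma strictAntiOn_hOfSin : StrictAntiOn hOfSin (Ioi (1 / 2)) := by
  intro a ha b hb hab
  have ha' := eight_mul_pow_three_sub_one_pos ha
  rw [mem_Ioi] at ha hb
  have hrat : (2 + b) * (8 * a ^ 3 - 1) < (2 + a) * (8 * b ^ 3 - 1) := by
    nlinarith [mul_pos (sub_pos.2 hab)
      (by positivity : 0 < 16 * (a ^ 2 + a * b + b ^ 2) + 8 * a * b * (a + b) + 1)]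
  have hsqrt : √(1 + a) < √(1 + b) := sqrt_lt_sqrt (by linarith) (by linarith)
  rw [hOfSin, hOfSin, div_lt_div_iff₀ (hOfSin_denom_pos hb) (hOfSin_denom_pos ha)]
  calc 2 * (2 + b) * (√(1 + a) * (8 * a ^ 3 - 1))
      = 2 * ((2 + b) * (8 * a ^ 3 - 1)) * √(1 + a) := by ring
    _ < 2 * ((2 + a) * (8 * b ^ 3 - 1)) * √(1 + b) := by gcongr
    _ = 2 * (2 + a) * (√(1 + b) * (8 * b ^ 3 - 1)) := by ring

lemma continuousOn_hOfSin : ContinuousOn hOfSin (Ioi (1 / 2)) :=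
  ContinuousOn.div (by fun_prop) (by fun_prop) fun _ hu => (hOfSin_denom_pos hu).ne'

lemma tendsto_hOfSin_nhdsGT : Tendsto hOfSin (𝓝[>] (1 / 2)) atTop := by
  have hnum : Tendsto (fun u : ℝ => 2 * (2 + u)) (𝓝[>] (1 / 2)) (𝓝 5) :=
    ((by fun_prop : Continuous fun u : ℝ => 2 * (2 + u)).tendsto' _ _ (by norm_num)).mono_left
      nhdsWithin_le_nhds
  have hden : Tendsto (fun u : ℝ => √(1 + u) * (8 * u ^ 3 - 1)) (𝓝[>] (1 / 2)) (𝓝[>] 0) := by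
    refine tendsto_nhdsWithin_of_tendsto_nhds_of_eventually_within _ ?_
      (eventually_nhdsWithin_of_forall fun u hu => hOfSin_denom_pos hu)
    exact ((by fun_prop : Continuous fun u : ℝ => √(1 + u) * (8 * u ^ 3 - 1)).tendsto' _ _
      (by norm_num)).mono_left nhdsWithin_le_nhds
  exact (hnum.pos_mul_atTop (by norm_num) hden.inv_tendsto_nhdsGT_zero).congr fun u =>
    (div_eq_mul_inv _ _).symm

lemma f_pi_add (x : ℝ) : f (π + x) = -sin x * (1 - 1 / (8 * cos (x / 2) ^ 3)) := by
  rw [f, add_comm, sin_add_pi, show (x + π) / 2 = x / 2 + π / 2 by ring, sin_add_pi_div_two]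

lemma h_half_angle_form {s c : ℝ} (hs : 0 < s) (hc : 0 < c) (hsc : s < c)
    (hsc₁ : s ^ 2 + c ^ 2 = 1) :
    (2 * s * c * (1 - 1 / (8 * c ^ 3)) - 2 * s * c * (1 - 1 / (8 * s ^ 3))) /
      (2 * (2 * s * c) * (c ^ 2 - s ^ 2) * (1 - 1 / (8 * (2 * s * c) ^ 3))) =
    2 * (2 + 2 * s * c) / ((c + s) * (8 * (2 * s * c) ^ 3 - 1)) := by
  -- where `8 (2sc)³ = 1` both sides are junk zeros
  rcases eq_or_ne (8 * (2 * s * c) ^ 3) 1 with hD | hD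
  · simp [hD]
  have hD' : 8 * (2 * s * c) ^ 3 - 1 ≠ 0 := sub_ne_zero.2 hD
  have hcs : c ^ 2 - s ^ 2 ≠ 0 := by nlinarith
  field_simp
  congr 1
  linear_combination (c - s) * (c + s) * hsc₁

lemma h_eq_hOfSin_sin {x : ℝ} (hx : x ∈ Ioo 0 (π / 2)) : h x = hOfSin (sin x) := by
  obtain ⟨hx₀, hx₁⟩ := hx
  have hs : 0 < sin (x / 2) := sin_pos_of_pos_of_lt_pi (by linarith) (by linarith [pi_pos])
  have hc : 0 < cos (x / 2) := cos_pos_of_mem_Ioo ⟨by linarith [pi_pos], by linarith⟩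
  have hsin : sin x = 2 * sin (x / 2) * cos (x / 2) := by
    rw [← sin_two_mul, mul_div_cancel₀ _ two_ne_zero]
  have hcos : cos x = cos (x / 2) ^ 2 - sin (x / 2) ^ 2 := by
    rw [← cos_two_mul', mul_div_cancel₀ _ two_ne_zero]
  have hsc : sin (x / 2) < cos (x / 2) := by
    nlinarith [cos_pos_of_mem_Ioo ⟨by linarith [pi_pos], hx₁⟩]
  have hsqrt : √(1 + sin x) = cos (x / 2) + sin (x / 2) := by
    rw [hsin, ← sqrt_sq (by positivity : 0 ≤ cos (x / 2) + sin (x / 2))]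
    congr 1
    linear_combination -sin_sq_add_cos_sq (x / 2)
  rw [h, f_pi_add, f, f, mul_div_cancel_left₀ _ two_ne_zero, sin_two_mul, hOfSin, hsqrt, hcos,
    hsin, neg_mul, neg_neg]
  exact h_half_angle_form hs hc hsc (sin_sq_add_cos_sq _)

lemma sin_mem_Ioo_half_one {x : ℝ} (hx : x ∈ Ioo (π / 6) (π / 2)) : sin x ∈ Ioo (1 / 2) 1 := by
  have hsub : Icc (π / 6) (π / 2) ⊆ Icc (-(π / 2)) (π / 2) :=
    Icc_subset_Icc_left (by linarith [pi_pos])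
  have hmono := strictMonoOn_sin.mono hsub
  constructor
  · simpa only [sin_pi_div_six] using
      hmono ⟨le_rfl, by linarith [pi_pos]⟩ (Ioo_subset_Icc_self hx) hx.1
  · simpa only [sin_pi_div_two] using
      hmono (Ioo_subset_Icc_self hx) ⟨by linarith [pi_pos], le_rfl⟩ hx.2

lemma eqOn_h_hOfSin_comp_sin : EqOn h (hOfSin ∘ sin) (Ioo (π / 6) (π / 2)) :=
  fun _ hx => h_eq_hOfSin_sin (Ioo_subset_Ioo_left (by positivity) hx)

lemma strictAntiOn_h : StrictAntiOn h (Ioo (π / 6) (π / 2)) := by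
  have hsin : StrictMonoOn sin (Ioo (π / 6) (π / 2)) :=
    strictMonoOn_sin.mono (Ioo_subset_Icc_self.trans (Icc_subset_Icc_left (by linarith [pi_pos])))
  exact (strictAntiOn_hOfSin.comp_strictMonoOn hsin fun _ hx =>
    (sin_mem_Ioo_half_one hx).1).congr eqOn_h_hOfSin_comp_sin.symm

lemma three_sqrt_two_div_seven_lt_h {x : ℝ} (hx : x ∈ Ioo (π / 6) (π / 2)) :
    3 * √2 / 7 < h x := by
  obtain ⟨hu, hu'⟩ := sin_mem_Ioo_half_one hx
  rw [eqOn_h_hOfSin_comp_sin hx, Function.comp_apply, ← hOfSin_one]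
  exact strictAntiOn_hOfSin hu (by norm_num : (1 : ℝ) ∈ Ioi (1 / 2)) hu'

lemma continuousOn_h : ContinuousOn h (Ioo (π / 6) (π / 2)) :=
  (continuousOn_hOfSin.comp continuous_sin.continuousOn fun _ hx =>
    (sin_mem_Ioo_half_one hx).1).congr eqOn_h_hOfSin_comp_sin

lemma tendsto_h_nhdsGT : Tendsto h (𝓝[>] (π / 6)) atTop := by
  have hsin : Tendsto sin (𝓝[>] (π / 6)) (𝓝[>] (1 / 2)) :=
    tendsto_nhdsWithin_of_tendsto_nhds_of_eventually_within _
      (by simpa only [sin_pi_div_six] using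
        (continuous_sin.tendsto (π / 6)).mono_left nhdsWithin_le_nhds)
      (mem_of_superset (Ioo_mem_nhdsGT (by linarith [pi_pos])) fun _ hx =>
        (sin_mem_Ioo_half_one hx).1)
  exact (tendsto_hOfSin_nhdsGT.comp hsin).congr'
    (eqOn_h_hOfSin_comp_sin.eventuallyEq_of_mem (Ioo_mem_nhdsGT (by linarith [pi_pos]))).symm

lemma tendsto_h_nhdsLT : Tendsto h (𝓝[<] (π / 2)) (𝓝 (3 * √2 / 7)) := by
  have hcont : ContinuousAt (hOfSin ∘ sin) (π / 2) := by
    refine ContinuousAt.comp ?_ continuous_sin.continuousAt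
    rw [sin_pi_div_two]
    exact continuousOn_hOfSin.continuousAt (Ioi_mem_nhds (by norm_num))
  have := hcont.tendsto
  rw [Function.comp_apply, sin_pi_div_two, hOfSin_one] at this
  exact (this.mono_left nhdsWithin_le_nhds).congr'
    (eqOn_h_hOfSin_comp_sin.eventuallyEq_of_mem (Ioo_mem_nhdsLT (by linarith [pi_pos]))).symm

theorem stmt18 :
    StrictAntiOn h (Ioo (π/6) (π/2)) ∧
    InjOn h (Ioo (π/6) (π/2)) ∧
    h '' (Ioo (π/6) (π/2)) = Ioi (3 * Real.sqrt 2 / 7) ∧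
    Filter.Tendsto h (nhdsWithin (π/6) (Ioi (π/6))) Filter.atTop ∧
    Filter.Tendsto h (nhdsWithin (π/2) (Iio (π/2))) (nhds (3 * Real.sqrt 2 / 7)) := by
  refine ⟨strictAntiOn_h, strictAntiOn_h.injOn, ?_, tendsto_h_nhdsGT, tendsto_h_nhdsLT⟩
  exact (image_subset_iff.2 fun _ hx => three_sqrt_two_div_seven_lt_h hx).antisymm <|
    Ioi_subset_image_Ioo_of_tendsto (by linarith [pi_pos]) continuousOn_h tendsto_h_nhdsGT
      tendsto_h_nhdsLT
end
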